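/- Let N1 and N2 be phylogenetic networks on the same set S of taxa. For any nodes v1 of N1 and v2 of N2, if ℓ(v1) = ℓ(v2) then μ(v1) = μ(v2), where μ(v) = (m_1(v),…,m_n(v)) is the vector whose i-th entry is the number of directed paths from v to the leaf labeled i. -/

import Mathlib

open scoped Classical

/-- Nested-label encoding type at nesting depth `n`: an atom of `S`, or a
multiset of encodings of smaller depth. -/
def NLT (S : Type) : ℕ → Type :=
  fun n => Nat.rec S (fun _ ih => S ⊕ Multiset ih) n

/-- A phylogenetic network on a set `S` of taxa: a rooted finite DAG whose
leaves are bijectively labeled by `S`. -/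
structure PhyloNetwork (S : Type) [Fintype S] : Type 1 where
  V : Type
  fintypeV : Fintype V
  arc : V → V → Prop
  acyclic : ∀ v, ¬ Relation.TransGen arc v v
  root : V
  rootConn : ∀ v, Relation.ReflTransGen arc root v
  lab : V → S
  labBij : ∀ s : S, ∃! v, (∀ w, ¬ arc v w) ∧ lab v = s

attribute [instance] PhyloNetwork.fintypeV

variable {S : Type} [Fintype S]

def PhyloNetwork.IsLeaf (N : PhyloNetwork S) (v : N.V) : Prop := ∀ w, ¬ N.arc v w

noncomputable def PhyloNetwork.children (N : PhyloNetwork S) (v : N.V) : Multiset N.V :=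
  (Finset.univ.filter (fun w => N.arc v w)).val

/-- The nested label of a node, encoded at depth `n` (meaningful as soon as
`n` exceeds the height of the node). -/
noncomputable def nlAux (N : PhyloNetwork S) : (n : ℕ) → N.V → NLT S n
  | 0 => fun v => N.lab v
  | n+1 => fun v =>
      if N.IsLeaf v then Sum.inl (N.lab v)
      else Sum.inr ((N.children v).map (nlAux N n))

/-- A sufficient encoding depth for comparing nodes of the two networks. -/
def fuel (N1 N2 : PhyloNetwork S) : ℕ := Fintype.card N1.V + Fintype.card N2.V

/-- `ℓ(u) = ℓ(v)`: the nested labels of `u` and `v` coincide. -/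
def sameNL (N1 N2 : PhyloNetwork S) (u : N1.V) (v : N2.V) : Prop :=
  ∀ n, fuel N1 N2 ≤ n → nlAux N1 n u = nlAux N2 n v

/-- Symmetric difference of multisets. -/
noncomputable def msd {X : Type*} (M1 M2 : Multiset X) : Multiset X :=
  (M1 - M2) + (M2 - M1)

/-- The nested labels representation `Υ(N)` (at encoding depth `n`). -/
noncomputable def upsilon (N : PhyloNetwork S) (n : ℕ) : Multiset (NLT S n) :=
  Finset.univ.val.map (nlAux N n)

/-- Nakhleh's dissimilarity measure `m`. -/
noncomputable def mdist (N1 N2 : PhyloNetwork S) : ℝ :=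
  (Multiset.card (msd (upsilon N1 (fuel N1 N2)) (upsilon N2 (fuel N1 N2))) : ℝ) / 2

/-- `m_i(v)`: number of directed paths from `v` to the leaf labeled `i`. -/
noncomputable def PhyloNetwork.mu (N : PhyloNetwork S) (v : N.V) (i : S) : ℕ :=
  Set.ncard {l : List N.V | l.Chain' N.arc ∧ l.head? = some v ∧
    ∃ w, l.getLast? = some w ∧ N.IsLeaf w ∧ N.lab w = i}

/-- The μ-representation of `N`: the multiset of μ-vectors of its nodes. -/
noncomputable def muRep (N : PhyloNetwork S) : Multiset (S → ℕ) :=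
  Finset.univ.val.map (fun v => N.mu v)

/-- The μ-distance. -/
noncomputable def dmu (N1 N2 : PhyloNetwork S) : ℝ :=
  (Multiset.card (msd (muRep N1) (muRep N2)) : ℝ) / 2

/-- Number of directed paths between two nodes. -/
noncomputable def numPaths (N : PhyloNetwork S) (u w : N.V) : ℕ :=
  Set.ncard {l : List N.V | l.Chain' N.arc ∧ l.head? = some u ∧ l.getLast? = some w}

/-- Leaf-label preserving isomorphism of phylogenetic networks. -/
def PhyloIso (N1 N2 : PhyloNetwork S) : Prop :=
  ∃ e : N1.V ≃ N2.V, (∀ u v, N1.arc u v ↔ N2.arc (e u) (e v)) ∧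
    ∀ v, N1.IsLeaf v → N2.lab (e v) = N1.lab v

/-- Height of a node: the largest length of a directed path from it to a leaf. -/
noncomputable def PhyloNetwork.height (N : PhyloNetwork S) (v : N.V) : ℕ :=
  sSup {k | ∃ l : List N.V, l.Chain' N.arc ∧ l.head? = some v ∧
    (∃ w, l.getLast? = some w ∧ N.IsLeaf w) ∧ l.length = k + 1}

/-! ### Auxiliary lemmas -/

section AuxProof

lemma aux_chain'_transGen {α : Type*} {r : α → α → Prop} :
    ∀ (t : List α) (x : α), List.Chain' r (x :: t) → ∀ y ∈ t, Relation.TransGen r x y := by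
  intro t
  induction t with
  | nil => intro x _ y hy; simp at hy
  | cons z t ih =>
    intro x hc y hy
    replace hc := List.isChain_cons_cons.1 hc
    rcases List.mem_cons.1 hy with rfl | hy
    · exact Relation.TransGen.single hc.1
    · exact Relation.TransGen.head hc.1 (ih z hc.2 y hy)

lemma aux_chain'_nodup (N : PhyloNetwork S) :
    ∀ (l : List N.V), l.Chain' N.arc → l.Nodup := by
  intro l
  induction l with
  | nil => simp
  | cons x t ih =>
    intro hc
    rw [List.nodup_cons]
    exact ⟨fun hx => N.acyclic x (aux_chain'_transGen t x hc x hx), ih hc.tail⟩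

/-- The set of paths counted by `mu`. -/
def muSet (N : PhyloNetwork S) (v : N.V) (i : S) : Set (List N.V) :=
  {l : List N.V | l.Chain' N.arc ∧ l.head? = some v ∧
    ∃ w, l.getLast? = some w ∧ N.IsLeaf w ∧ N.lab w = i}

lemma muSet_finite (N : PhyloNetwork S) (v : N.V) (i : S) : (muSet N v i).Finite :=
  (List.finite_length_le N.V (Fintype.card N.V)).subset (fun l hl =>
    (aux_chain'_nodup N l hl.1).length_le_card)

noncomputable def muFinset (N : PhyloNetwork S) (v : N.V) (i : S) : Finset (List N.V) :=
  (muSet_finite N v i).toFinset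

lemma mem_muFinset {N : PhyloNetwork S} {v : N.V} {i : S} {l : List N.V} :
    l ∈ muFinset N v i ↔ (l.Chain' N.arc ∧ l.head? = some v ∧
      ∃ w, l.getLast? = some w ∧ N.IsLeaf w ∧ N.lab w = i) := by
  rw [muFinset, Set.Finite.mem_toFinset]; rfl

lemma mu_eq_card (N : PhyloNetwork S) (v : N.V) (i : S) :
    N.mu v i = (muFinset N v i).card := by
  rw [PhyloNetwork.mu, muFinset]
  exact Set.ncard_eq_toFinset_card _ _

lemma mu_leaf (N : PhyloNetwork S) (v : N.V) (hv : N.IsLeaf v) (i : S) :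
    N.mu v i = if N.lab v = i then 1 else 0 := by
  rw [mu_eq_card]
  have hset : muFinset N v i = if N.lab v = i then {[v]} else ∅ := by
    ext l
    rw [mem_muFinset]
    split_ifs with hl
    · simp only [Finset.mem_singleton]
      constructor
      · rintro ⟨hc, hh, w, hlast, hwleaf, hwlab⟩
        cases l with
        | nil => simp at hh
        | cons a t =>
          obtain rfl : v = a := (by simpa using hh : a = v).symm
          cases t with
          | nil => rfl
          | cons b t' =>
            replace hc := List.isChain_cons_cons.1 hc
            exact absurd hc.1 (hv b)
      · rintro rfl
        exact ⟨List.isChain_singleton v, rfl, v, rfl, hv, hl⟩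
    · simp only [Finset.notMem_empty, iff_false]
      rintro ⟨hc, hh, w, hlast, hwleaf, hwlab⟩
      cases l with
      | nil => simp at hh
      | cons a t =>
        obtain rfl : v = a := (by simpa using hh : a = v).symm
        cases t with
        | nil =>
          obtain rfl : v = w := by simpa using hlast
          exact hl hwlab
        | cons b t' =>
          replace hc := List.isChain_cons_cons.1 hc
          exact hv b hc.1
  rw [hset]
  split_ifs <;> simp

lemma childrenFinset_mem {N : PhyloNetwork S} {v c : N.V} :
    c ∈ Finset.univ.filter (fun w => N.arc v w) ↔ N.arc v c := by
  simp [Finset.mem_filter]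

lemma mu_internal (N : PhyloNetwork S) (v : N.V) (hv : ¬ N.IsLeaf v) (i : S) :
    N.mu v i = ((N.children v).map (fun c => N.mu c i)).sum := by
  classical
  set F : Finset N.V := Finset.univ.filter (fun w => N.arc v w) with hF
  have key : muFinset N v i = F.biUnion (fun c => (muFinset N c i).image (List.cons v)) := by
    ext l
    simp only [Finset.mem_biUnion, Finset.mem_image, mem_muFinset]
    constructor
    · rintro ⟨hc, hh, w, hlast, hwleaf, hwlab⟩
      cases l with
      | nil => simp at hh
      | cons a t =>
        obtain rfl : v = a := (by simpa using hh : a = v).symm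
        cases t with
        | nil =>
          obtain rfl : v = w := by simpa using hlast
          exact absurd hwleaf hv
        | cons b t' =>
          replace hc := List.isChain_cons_cons.1 hc
          refine ⟨b, childrenFinset_mem.2 hc.1, b :: t',
            ⟨hc.2, rfl, w, ?_, hwleaf, hwlab⟩, rfl⟩
          simpa using hlast
    · rintro ⟨c, hcF, t, ⟨hc, hh, w, hlast, hwleaf, hwlab⟩, rfl⟩
      have harc : N.arc v c := childrenFinset_mem.1 hcF
      cases t with
      | nil => simp at hh
      | cons b t' =>
        obtain rfl : c = b := (by simpa using hh : b = c).symm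
        exact ⟨List.isChain_cons_cons.2 ⟨harc, hc⟩, rfl, w, by simpa using hlast, hwleaf, hwlab⟩
  have hdisj : ∀ c1 ∈ F, ∀ c2 ∈ F, c1 ≠ c2 →
      Disjoint ((muFinset N c1 i).image (List.cons v)) ((muFinset N c2 i).image (List.cons v)) := by
    intro c1 _ c2 _ hne
    rw [Finset.disjoint_left]
    rintro l hl1 hl2
    obtain ⟨t1, ht1, rfl⟩ := Finset.mem_image.1 hl1
    obtain ⟨t2, ht2, heq⟩ := Finset.mem_image.1 hl2
    obtain ⟨-, rfl⟩ : v = v ∧ t2 = t1 := by simpa using heq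
    obtain ⟨-, hh1, -⟩ := mem_muFinset.1 ht1
    obtain ⟨-, hh2, -⟩ := mem_muFinset.1 ht2
    rw [hh1] at hh2
    exact hne (Option.some.inj hh2)
  rw [mu_eq_card, key, Finset.card_biUnion hdisj]
  have himg : ∀ c, ((muFinset N c i).image (List.cons v)).card = N.mu c i := by
    intro c
    rw [Finset.card_image_of_injective _ (fun a b h => (List.cons.injEq _ _ _ _ ▸ h).2),
      mu_eq_card]
  simp only [himg]
  rfl

lemma nlAux_leaf (N : PhyloNetwork S) (n : ℕ) (v : N.V) (h : N.IsLeaf v) :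
    nlAux N (n+1) v = Sum.inl (N.lab v) := by
  show (if N.IsLeaf v then _ else _) = _
  exact if_pos h

lemma nlAux_internal (N : PhyloNetwork S) (n : ℕ) (v : N.V) (h : ¬ N.IsLeaf v) :
    nlAux N (n+1) v = Sum.inr ((N.children v).map (nlAux N n)) := by
  show (if N.IsLeaf v then _ else _) = _
  exact if_neg h

/-- A measure on nodes that strictly decreases along arcs. -/
noncomputable def dd (N : PhyloNetwork S) (v : N.V) : ℕ :=
  (Finset.univ.filter (fun w => Relation.ReflTransGen N.arc v w)).card

lemma dd_pos (N : PhyloNetwork S) (v : N.V) : 0 < dd N v := by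
  rw [dd, Finset.card_pos]
  exact ⟨v, Finset.mem_filter.2 ⟨Finset.mem_univ v, Relation.ReflTransGen.refl⟩⟩

lemma dd_le_card (N : PhyloNetwork S) (v : N.V) : dd N v ≤ Fintype.card N.V := by
  classical
  exact (Finset.card_filter_le _ _).trans (le_of_eq (Finset.card_univ))

lemma dd_lt_of_arc (N : PhyloNetwork S) {v c : N.V} (h : N.arc v c) : dd N c < dd N v := by
  apply Finset.card_lt_card
  constructor
  · intro w hw
    rw [Finset.mem_filter] at hw ⊢
    exact ⟨hw.1, Relation.ReflTransGen.head h hw.2⟩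
  · intro hsub
    have hv : v ∈ Finset.univ.filter (fun w => Relation.ReflTransGen N.arc v w) :=
      Finset.mem_filter.2 ⟨Finset.mem_univ v, Relation.ReflTransGen.refl⟩
    have hv' := hsub hv
    rw [Finset.mem_filter] at hv'
    exact N.acyclic v (Relation.TransGen.head' h hv'.2)

lemma mem_children {N : PhyloNetwork S} {v c : N.V} :
    c ∈ N.children v ↔ N.arc v c := by
  rw [PhyloNetwork.children]
  exact childrenFinset_mem

/-- The master induction: if two nodes have the same nested label at a depth
at least the `dd`-measure of the first, then they have the same μ-vector and
the same nested label at the next depth. -/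
lemma master (N1 N2 : PhyloNetwork S) :
    ∀ m : ℕ, ∀ (v1 : N1.V) (v2 : N2.V), dd N1 v1 ≤ m →
      nlAux N1 m v1 = nlAux N2 m v2 →
      (∀ i, N1.mu v1 i = N2.mu v2 i) ∧ nlAux N1 (m+1) v1 = nlAux N2 (m+1) v2 := by
  intro m
  induction m with
  | zero =>
    intro v1 v2 hd _
    exact absurd hd (by have := dd_pos N1 v1; omega)
  | succ k ih =>
    intro v1 v2 hd heq
    by_cases h1 : N1.IsLeaf v1 <;> by_cases h2 : N2.IsLeaf v2
    · -- both leaves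
      rw [nlAux_leaf N1 k v1 h1,
        nlAux_leaf N2 k v2 h2] at heq
      have hlab : N1.lab v1 = N2.lab v2 := Sum.inl.inj heq
      constructor
      · intro i
        rw [mu_leaf N1 v1 h1 i, mu_leaf N2 v2 h2 i, hlab]
      · rw [nlAux_leaf N1 (k+1) v1 h1,
          nlAux_leaf N2 (k+1) v2 h2, hlab]
    · -- v1 leaf, v2 not: contradiction
      rw [nlAux_leaf N1 k v1 h1,
        nlAux_internal N2 k v2 h2] at heq
      exact absurd heq (by simp)
    · rw [nlAux_internal N1 k v1 h1,
        nlAux_leaf N2 k v2 h2] at heq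
      exact absurd heq (by simp)
    · -- both internal
      rw [nlAux_internal N1 k v1 h1,
        nlAux_internal N2 k v2 h2] at heq
      have hmc : (N1.children v1).map (nlAux N1 k) = (N2.children v2).map (nlAux N2 k) :=
        Sum.inr.inj heq
      have hrel : Multiset.Rel (fun c1 c2 => nlAux N1 k c1 = nlAux N2 k c2)
          (N1.children v1) (N2.children v2) :=
        Multiset.rel_map.1 (Multiset.rel_eq.2 hmc)
      have hrel' : Multiset.Rel (fun c1 c2 => (∀ i, N1.mu c1 i = N2.mu c2 i) ∧
          nlAux N1 (k+1) c1 = nlAux N2 (k+1) c2) (N1.children v1) (N2.children v2) := by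
        refine hrel.mono (fun c1 hc1 c2 _ hcc => ?_)
        have harc : N1.arc v1 c1 := mem_children.1 hc1
        have hdc : dd N1 c1 ≤ k := by
          have := dd_lt_of_arc N1 harc
          omega
        exact ih c1 c2 hdc hcc
      constructor
      · intro i
        rw [mu_internal N1 v1 h1 i, mu_internal N2 v2 h2 i]
        have : (N1.children v1).map (fun c => N1.mu c i)
            = (N2.children v2).map (fun c => N2.mu c i) :=
          Multiset.rel_eq.1 (Multiset.rel_map.2 (hrel'.mono (fun c1 _ c2 _ hcc => hcc.1 i)))
        rw [this]
      · rw [nlAux_internal N1 (k+1) v1 h1,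
          nlAux_internal N2 (k+1) v2 h2]
        congr 1
        exact Multiset.rel_eq.1 (Multiset.rel_map.2 (hrel'.mono (fun c1 _ c2 _ hcc => hcc.2)))

end AuxProof

/-- If two nodes of two phylogenetic networks over the same taxa set have the
same nested label, `ℓ(v1) = ℓ(v2)`, then they have the same μ-vector:
`μ(v1) = μ(v2)`, i.e. for each taxon `i` the numbers of directed paths to the
leaf labeled `i` coincide. -/
theorem sameNL_imp_same_mu (N1 N2 : PhyloNetwork S) (v1 : N1.V) (v2 : N2.V)
    (h : sameNL N1 N2 v1 v2) :
    ∀ i : S, N1.mu v1 i = N2.mu v2 i := by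
  have hd : dd N1 v1 ≤ fuel N1 N2 :=
    (dd_le_card N1 v1).trans (Nat.le_add_right _ _)
  exact (master N1 N2 (fuel N1 N2) v1 v2 hd (h (fuel N1 N2) le_rfl)).1
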